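/- With P = [[1+t, 1+t, 0],[0, 1+t, 0],[0, 1+t, 1+t]], one has P^{-1} L_1(s,t) P = BKL_1(s, t^{-1}) and P^{-1} L_2(s,t) P = BKL_2(s, t^{-1}); equivalently, L_1(s,t)·P = P·BKL_1(s,t^{-1}) and L_2(s,t)·P = P·BKL_2(s,t^{-1}) over Z[s^{±1}, t^{±1}]. -/

import Mathlib

/-- The ring `ℤ[s^{±1}, t^{±1}]`. -/
abbrev RST : Type := AddMonoidAlgebra ℤ (Fin 2 →₀ ℤ)

noncomputable def s : RST := AddMonoidAlgebra.single (Finsupp.single 0 1) 1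
noncomputable def t : RST := AddMonoidAlgebra.single (Finsupp.single 1 1) 1
noncomputable def ti : RST := AddMonoidAlgebra.single (Finsupp.single 1 (-1)) 1

noncomputable def L1 : Matrix (Fin 3) (Fin 3) RST :=
  !![s ^ 2 * ti, -(s ^ 2 * (1 + ti)), s ^ 2; 0, -s, s; 0, 0, 1]

noncomputable def L2 : Matrix (Fin 3) (Fin 3) RST :=
  !![1, 0, 0; 1, -s, 0; 1, -(s * (1 + ti)), s ^ 2 * ti]

noncomputable def BKL1 (q u : RST) : Matrix (Fin 3) (Fin 3) RST :=
  !![q ^ 2 * u, 0, q ^ 2 - q; 0, 0, q; 0, 1, 1 - q]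

noncomputable def BKL2 (q u : RST) : Matrix (Fin 3) (Fin 3) RST :=
  !![0, q, 0; 1, 1 - q, 0; 0, u * (q ^ 2 - q), q ^ 2 * u]

noncomputable def P : Matrix (Fin 3) (Fin 3) RST :=
  !![1 + t, 1 + t, 0; 0, 1 + t, 0; 0, 1 + t, 1 + t]

/-! `P` is the scalar `1 + t` times the matrix `P₀` below, which is unimodular over `ℤ`, and a
scalar commutes with every matrix, so it suffices to conjugate by `P₀`. The identities
`Lᵢ * P₀ = P₀ * BKLᵢ(s, t⁻¹)` are then entrywise polynomial identities in `s` and `t⁻¹`. -/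

noncomputable def P₀ : Matrix (Fin 3) (Fin 3) RST :=
  !![1, 1, 0; 0, 1, 0; 0, 1, 1]

lemma P_eq_smul_P₀ : P = (1 + t) • P₀ := by
  rw [P, P₀, Matrix.smul_of]
  simp only [Matrix.smul_cons, smul_eq_mul, mul_one, mul_zero, Matrix.smul_empty]

lemma semiconjBy_P₀_BKL1 : SemiconjBy P₀ (BKL1 s ti) L1 := by
  rw [SemiconjBy, P₀, BKL1, L1, Matrix.mul_fin_three, Matrix.mul_fin_three]
  simp only [EmbeddingLike.apply_eq_iff_eq, Matrix.vecCons_inj, and_true]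
  refine ⟨⟨?_, ?_, ?_⟩, ⟨?_, ?_, ?_⟩, ⟨?_, ?_, ?_⟩⟩ <;> ring

lemma semiconjBy_P₀_BKL2 : SemiconjBy P₀ (BKL2 s ti) L2 := by
  rw [SemiconjBy, P₀, BKL2, L2, Matrix.mul_fin_three, Matrix.mul_fin_three]
  simp only [EmbeddingLike.apply_eq_iff_eq, Matrix.vecCons_inj, and_true]
  refine ⟨⟨?_, ?_, ?_⟩, ⟨?_, ?_, ?_⟩, ⟨?_, ?_, ?_⟩⟩ <;> ring

theorem stmt15 : L1 * P = P * BKL1 s ti ∧ L2 * P = P * BKL2 s ti := by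
  rw [P_eq_smul_P₀]
  exact ⟨(semiconjBy_P₀_BKL1.smul_left _).eq.symm, (semiconjBy_P₀_BKL2.smul_left _).eq.symm⟩
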